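/- arXiv:1907.10022 — 2 statements merged into one kernel-verified Lean document; each statement's English description precedes it below -/
import Mathlib

section
/- Let Γ be a finite group and σ ∈ Γ a central element of order two. Then there is an injective group homomorphism ρ : Γ → O(d, ℝ) into the orthogonal group of d×d real matrices, where d = |Γ|/2, satisfying ρ(σ) = -I (the negative of the identity matrix). -/
open Matrix

/-- A finite group Γ with a central involution σ embeds into the orthogonal group
O(d, ℝ) with d = |Γ|/2, sending σ to -I. -/
theorem embeds_in_orthogonal_with_minus_one (Γ : Type*) [Group Γ] [Fintype Γ] (σ : Γ)
    (hσ_central : σ ∈ Subgroup.center Γ) (hσ_order : orderOf σ = 2) :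
    ∃ ρ : Γ →* Matrix.orthogonalGroup (Fin (Fintype.card Γ / 2)) ℝ,
      Function.Injective ρ ∧
      ((ρ σ : Matrix.orthogonalGroup (Fin (Fintype.card Γ / 2)) ℝ) :
        Matrix (Fin (Fintype.card Γ / 2)) (Fin (Fintype.card Γ / 2)) ℝ) = -1 := by
  classical
  have hcomm : ∀ g : Γ, g * σ = σ * g := Subgroup.mem_center_iff.1 hσ_central
  have hσ1 : σ ≠ 1 := by
    intro h; rw [h, orderOf_one] at hσ_order; omega
  have hσ2 : σ * σ = 1 := by
    have := pow_orderOf_eq_one σ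
    rwa [hσ_order, pow_two] at this
  have hσinv : σ⁻¹ = σ := inv_eq_of_mul_eq_one_right hσ2
  set H := Subgroup.zpowers σ with hH
  have hσ2z : σ ^ (2 : ℤ) = 1 := by
    rw [show (2 : ℤ) = ((2 : ℕ) : ℤ) from rfl, zpow_natCast, pow_two, hσ2]
  have hmem : ∀ x : Γ, x ∈ H ↔ x = 1 ∨ x = σ := by
    intro x
    constructor
    · rintro ⟨n, hn⟩
      have hn' : σ ^ n = x := hn
      rcases Int.even_or_odd n with ⟨m, hm⟩ | ⟨m, hm⟩
      · left
        rw [← hn', hm, show m + m = 2 * m from (two_mul m).symm, _root_.zpow_mul, hσ2z,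
          _root_.one_zpow]
      · right
        rw [← hn', hm, _root_.zpow_add, _root_.zpow_mul, hσ2z, _root_.one_zpow, one_mul, zpow_one]
    · rintro (h | h)
      · rw [h]; exact one_mem H
      · rw [h]; exact Subgroup.mem_zpowers σ
  -- the sign function
  set u : Γ → ℝ := fun x => if x = 1 then 1 else if x = σ then -1 else 0 with hu
  have u_one : u 1 = 1 := if_pos rfl
  have u_sigma : u σ = -1 := by
    rw [hu]; simp [hσ1]
  have u_notmem : ∀ x, x ∉ H → u x = 0 := by
    intro x hx
    have h1 : x ≠ 1 := fun h => hx ((hmem x).2 (Or.inl h))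
    have h2 : x ≠ σ := fun h => hx ((hmem x).2 (Or.inr h))
    simp only [hu, if_neg h1, if_neg h2]
  have u_mul : ∀ a b : Γ, b ∈ H → u (a * b) = u a * u b := by
    intro a b hb
    rcases (hmem b).1 hb with hb1 | hb1
    · rw [hb1, mul_one, u_one, mul_one]
    · rw [hb1, u_sigma]
      by_cases ha1 : a = 1
      · rw [ha1, one_mul, u_one, one_mul, u_sigma]
      by_cases haσ : a = σ
      · rw [haσ, hσ2, u_one, u_sigma]; ring
      · have h1 : a * σ ≠ 1 := by
          intro h
          exact haσ (by rw [← hσinv]; exact eq_inv_of_mul_eq_one_left h)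
        have h2 : a * σ ≠ σ := by
          intro h
          exact ha1 (mul_right_cancel (by rw [h, one_mul]))
        simp only [hu, if_neg h1, if_neg h2, if_neg ha1, if_neg haσ, zero_mul]
  have u_inv : ∀ x : Γ, u x⁻¹ = u x := by
    intro x
    by_cases h1 : x = 1
    · rw [h1, inv_one]
    by_cases h2 : x = σ
    · rw [h2, hσinv]
    · have h1' : x⁻¹ ≠ 1 := fun h => h1 (by rw [← inv_inv x, h, inv_one])
      have h2' : x⁻¹ ≠ σ := fun h => h2 (by rw [← inv_inv x, h, hσinv])
      simp only [hu, if_neg h1, if_neg h2, if_neg h1', if_neg h2']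
  -- the quotient
  set Q := Γ ⧸ H with hQ
  haveI : Fintype Q := Fintype.ofFinite Q
  have hcardH : Nat.card H = 2 := by rw [hH, Nat.card_zpowers, hσ_order]
  have hcardQ : Fintype.card Q = Fintype.card Γ / 2 := by
    have h := Subgroup.card_eq_card_quotient_mul_card_subgroup H
    rw [hcardH, ← hQ] at h
    rw [← Nat.card_eq_fintype_card, ← Nat.card_eq_fintype_card]
    omega
  set d := Fintype.card Γ / 2 with hd
  let e : Fin d ≃ Q := (Fintype.equivFinOfCardEq hcardQ).symm
  set s : Q → Γ := Quotient.out with hs'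
  have hs : ∀ q : Q, (QuotientGroup.mk (s q) : Q) = q := fun q => QuotientGroup.out_eq' q
  have key : ∀ (g : Γ) (q q' : Q),
      (s q')⁻¹ * g * s q ∈ H ↔ q' = QuotientGroup.mk (g * s q) := by
    intro g q q'
    rw [mul_assoc, ← QuotientGroup.eq, hs]
  -- the matrices
  set M : Γ → Matrix (Fin d) (Fin d) ℝ :=
    fun g => Matrix.of fun i j => u ((s (e i))⁻¹ * g * s (e j)) with hM
  have M_apply : ∀ g i j, M g i j = u ((s (e i))⁻¹ * g * s (e j)) := fun _ _ _ => rfl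
  have M_one : M 1 = 1 := by
    ext i j
    rw [M_apply, Matrix.one_apply]
    by_cases hij : i = j
    · rw [hij, if_pos rfl, mul_one, inv_mul_cancel, u_one]
    · have : (s (e i))⁻¹ * 1 * s (e j) ∉ H := by
        rw [key]
        intro h
        rw [one_mul, hs] at h
        exact hij (e.injective h)
      rw [if_neg hij]
      exact u_notmem _ this
  have M_mul : ∀ g h : Γ, M g * M h = M (g * h) := by
    intro g h
    ext i j
    rw [Matrix.mul_apply, M_apply]
    set q0 : Q := QuotientGroup.mk (h * s (e j)) with hq0
    set k0 : Fin d := e.symm q0 with hk0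
    have hek0 : e k0 = q0 := e.apply_symm_apply q0
    rw [Finset.sum_eq_single k0]
    · have hmem2 : (s (e k0))⁻¹ * h * s (e j) ∈ H := by
        rw [key, hek0]
      rw [M_apply, M_apply, ← u_mul _ _ hmem2]
      congr 1
      group
    · intro k _ hk
      have : (s (e k))⁻¹ * h * s (e j) ∉ H := by
        rw [key]
        intro hcon
        exact hk (e.injective (by rw [hek0, hq0]; exact hcon))
      rw [M_apply, M_apply, u_notmem _ this, mul_zero]
    · intro hcon
      exact absurd (Finset.mem_univ k0) hcon
  have M_transpose : ∀ g : Γ, (M g)ᵀ = M g⁻¹ := by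
    intro g
    ext i j
    rw [Matrix.transpose_apply, M_apply, M_apply, ← u_inv]
    congr 1
    group
  have hmemO : ∀ g : Γ, M g ∈ Matrix.orthogonalGroup (Fin d) ℝ := by
    intro g
    rw [Matrix.mem_orthogonalGroup_iff]
    have hstar : star (M g) = (M g)ᵀ := by
      ext i j
      simp [Matrix.star_apply]
    rw [M_transpose, M_mul, mul_inv_cancel, M_one]
  set ρ : Γ →* Matrix.orthogonalGroup (Fin d) ℝ :=
    { toFun := fun g => ⟨M g, hmemO g⟩
      map_one' := Subtype.ext M_one
      map_mul' := fun g h => Subtype.ext (M_mul g h).symm } with hρ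
  have ρ_coe : ∀ g : Γ, ((ρ g : Matrix.orthogonalGroup (Fin d) ℝ) :
      Matrix (Fin d) (Fin d) ℝ) = M g := fun g => rfl
  -- ρ σ = -1
  have M_sigma : M σ = -1 := by
    ext i j
    rw [M_apply, Matrix.neg_apply, Matrix.one_apply]
    by_cases hij : i = j
    · rw [hij, if_pos rfl]
      have : (s (e j))⁻¹ * σ * s (e j) = σ := by
        rw [mul_assoc, ← hcomm, ← mul_assoc, inv_mul_cancel, one_mul]
      rw [this, u_sigma]
    · rw [if_neg hij, neg_zero]
      apply u_notmem
      rw [key]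
      intro hcon
      apply hij; apply e.injective
      have hx : (σ * s (e j))⁻¹ * s (e j) = σ := by
        rw [_root_.mul_inv_rev, hσinv, mul_assoc, ← hcomm (s (e j)), ← mul_assoc,
          inv_mul_cancel, one_mul]
      have hy : (QuotientGroup.mk (σ * s (e j)) : Q) = QuotientGroup.mk (s (e j)) :=
        QuotientGroup.eq.2 (by rw [hx]; exact Subgroup.mem_zpowers σ)
      rw [hcon, hy, hs]
  refine ⟨ρ, ?_, by rw [ρ_coe, M_sigma]⟩
  rw [injective_iff_map_eq_one]
  intro g hg
  have hMg : M g = 1 := by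
    have h := congrArg (Subtype.val) hg
    simpa [ρ_coe] using h
  set q0 : Q := QuotientGroup.mk (1 : Γ) with hq0
  set i : Fin d := e.symm (QuotientGroup.mk (g * s q0)) with hi
  set j : Fin d := e.symm q0 with hj
  have hEi : e i = QuotientGroup.mk (g * s q0) := e.apply_symm_apply _
  have hEj : e j = q0 := e.apply_symm_apply _
  have hHmem : (s (e i))⁻¹ * g * s (e j) ∈ H := by
    rw [key, hEi, hEj]
  have hentry : M g i j = (1 : Matrix (Fin d) (Fin d) ℝ) i j := by rw [hMg]
  have hij : i = j := by
    by_contra hij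
    rw [M_apply, Matrix.one_apply, if_neg hij] at hentry
    rcases (hmem _).1 hHmem with h1 | h1
    · rw [h1, u_one] at hentry; norm_num at hentry
    · rw [h1, u_sigma] at hentry; norm_num at hentry
  have hgH : (s q0)⁻¹ * g⁻¹ * s q0 ∈ H := by
    have h5 : e i = e j := by rw [hij]
    rw [hEi, hEj] at h5
    have h6 : (QuotientGroup.mk (g * s q0) : Q) = QuotientGroup.mk (s q0) := by
      rw [hs q0]; exact h5
    have h7 := QuotientGroup.eq.1 h6
    rwa [show (g * s q0)⁻¹ * s q0 = (s q0)⁻¹ * g⁻¹ * s q0 by group] at h7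
  rcases (hmem _).1 hgH with h1 | h1
  · have h8 : g⁻¹ = 1 := by
      calc g⁻¹ = s q0 * ((s q0)⁻¹ * g⁻¹ * s q0) * (s q0)⁻¹ := by group
        _ = 1 := by rw [h1, mul_one, mul_inv_cancel]
    rw [← inv_inv g, h8, inv_one]
  · exfalso
    have h8 : g⁻¹ = σ := by
      calc g⁻¹ = s q0 * ((s q0)⁻¹ * g⁻¹ * s q0) * (s q0)⁻¹ := by group
        _ = s q0 * σ * (s q0)⁻¹ := by rw [h1]
        _ = σ * s q0 * (s q0)⁻¹ := by rw [hcomm]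
        _ = σ := by group
    have hgσ : g = σ := by rw [← hσinv, ← h8, inv_inv]
    rw [hgσ, M_sigma] at hMg
    have h9 : (-1 : Matrix (Fin d) (Fin d) ℝ) j j = (1 : Matrix (Fin d) (Fin d) ℝ) j j := by
      rw [hMg]
    rw [Matrix.neg_apply, Matrix.one_apply_eq] at h9
    norm_num at h9
end

section
/- Let Γ = ℤ/n₁ × ⋯ × ℤ/n_r be a finite abelian group with invariant factors 2 ≤ n₁ ∣ n₂ ∣ ⋯ ∣ n_r, let s be the number of indices i with n_i = 2 and t the number of indices i with n_i > 2. If ρ : Γ → GL(d, ℝ) is an injective group homomorphism, then d ≥ s + 2t. -/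
open Polynomial


lemma my_zc {N q : ℕ} (hq : 2 ≤ q) (hdvd : q ∣ N) (hN : 2 ≤ N) {a b : ZMod q}
    (h : ((N / q * a.val : ℕ) : ZMod N) = ((N / q * b.val : ℕ) : ZMod N)) : a = b := by
  haveI : NeZero q := ⟨by omega⟩
  have hmod : (N / q * a.val) ≡ (N / q * b.val) [MOD N] :=
    (ZMod.natCast_eq_natCast_iff _ _ _).mp h
  have hdvd2 : (N : ℤ) ∣ ((N / q * b.val : ℕ) : ℤ) - ((N / q * a.val : ℕ) : ℤ) :=
    Nat.modEq_iff_dvd.mp hmod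
  have hc : (N / q) * q = N := Nat.div_mul_cancel hdvd
  have hc0 : 0 < N / q := Nat.div_pos (Nat.le_of_dvd (by omega) hdvd) (by omega)
  have hNfact : (N : ℤ) = ((N / q : ℕ) : ℤ) * (q : ℤ) := by exact_mod_cast hc.symm
  rw [hNfact] at hdvd2
  push_cast at hdvd2
  have h2 : ((N / q : ℕ) : ℤ) * (q : ℤ) ∣ ((N / q : ℕ) : ℤ) * (((b.val : ℤ)) - (a.val : ℤ)) := by
    rw [mul_sub]
    exact hdvd2
  have h3 : (q : ℤ) ∣ ((b.val : ℤ)) - (a.val : ℤ) :=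
    (mul_dvd_mul_iff_left (by exact_mod_cast hc0.ne' : ((N / q : ℕ) : ℤ) ≠ 0)).mp h2
  have h4 : a.val ≡ b.val [MOD q] := Nat.modEq_iff_dvd.mpr (by push_cast; exact h3)
  exact ZMod.val_injective q (h4.eq_of_lt_of_lt (ZMod.val_lt a) (ZMod.val_lt b))

lemma my_coordpow {N q : ℕ} (hdvd : q ∣ N) (c : ℕ) :
    (Multiplicative.ofAdd (((N / q * c : ℕ) : ZMod N))) ^ q = 1 := by
  apply Multiplicative.toAdd.injective
  rw [toAdd_pow, toAdd_ofAdd]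
  rw [toAdd_one, nsmul_eq_mul]
  have h0 : ((q * (N / q * c) : ℕ) : ZMod N) = 0 := by
    rw [← mul_assoc, Nat.mul_div_cancel' hdvd, Nat.cast_mul, ZMod.natCast_self, zero_mul]
  calc (q : ZMod N) * ((N / q * c : ℕ) : ZMod N)
      = ((q * (N / q * c) : ℕ) : ZMod N) := by push_cast; ring
    _ = 0 := h0


/-- Step B: a faithful real representation of a finite abelian group yields a finite
set of (complex-valued) characters, at most `d` of them, closed under pointwise
inverse, which jointly separate points. -/
theorem my_stepB {G : Type} [CommGroup G] [Fintype G] {d : ℕ}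
    (ρ : G →* GL (Fin d) ℝ) (hρ : Function.Injective ρ) :
    ∃ S : Finset (G → ℂ),
      S.card ≤ d ∧
      (∀ χ ∈ S, ∀ g h : G, χ (g * h) = χ g * χ h) ∧
      (∀ χ ∈ S, χ 1 = 1) ∧
      (∀ χ ∈ S, (fun g => (χ g)⁻¹) ∈ S) ∧
      (∀ g : G, (∀ χ ∈ S, χ g = 1) → g = 1) := by
  classical
  set τ : Matrix (Fin d) (Fin d) ℝ →+* Matrix (Fin d) (Fin d) ℂ :=
    (algebraMap ℝ ℂ).mapMatrix with hτ
  set F : G →* Module.End ℂ (Fin d → ℂ) :=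
    ((Matrix.toLinAlgEquiv' : Matrix (Fin d) (Fin d) ℂ ≃ₐ[ℂ]
        Module.End ℂ (Fin d → ℂ)).toAlgHom.toRingHom.toMonoidHom).comp
      ((τ.toMonoidHom).comp ((Units.coeHom (Matrix (Fin d) (Fin d) ℝ)).comp ρ)) with hF
  have hFapply : ∀ (g : G) (v : Fin d → ℂ),
      F g v = ((ρ g : Matrix (Fin d) (Fin d) ℝ).map (algebraMap ℝ ℂ)).mulVec v := by
    intro g v
    simp [hF, hτ, Matrix.toLinAlgEquiv'_apply, Matrix.mulVecLin_apply, RingHom.mapMatrix_apply]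
  have hcomm : ∀ g h : G, Commute (F g) (F h) := by
    intro g h
    unfold Commute SemiconjBy
    rw [← map_mul, ← map_mul, mul_comm]
  have hN : (Fintype.card G : ℂ) ≠ 0 := Nat.cast_ne_zero.mpr Fintype.card_ne_zero
  have hsemi : ∀ g : G, (F g).IsSemisimple := by
    intro g
    refine Module.End.isSemisimple_of_squarefree_aeval_eq_zero
      (p := X ^ (Fintype.card G) - 1)
      ((Polynomial.X_pow_sub_one_separable_iff.mpr hN).squarefree) ?_
    rw [map_sub, map_pow, aeval_X, map_one, ← map_pow, pow_card_eq_one, map_one, sub_self]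
  have heq : ∀ (g : G) (μ : ℂ), (F g).maxGenEigenspace μ = (F g).eigenspace μ := fun g μ =>
    ((hsemi g).isFinitelySemisimple).maxGenEigenspace_eq_eigenspace μ
  have htop : ⨆ χ : G → ℂ, ⨅ g : G, (F g).maxGenEigenspace (χ g) = ⊤ :=
    Module.End.iSup_iInf_maxGenEigenspace_eq_top_of_iSup_maxGenEigenspace_eq_top_of_commute
      (fun g => F g) (fun g h _ => hcomm g h)
      (fun g => Module.End.iSup_maxGenEigenspace_eq_top (F g))
  have hind : iSupIndep (fun χ : G → ℂ => ⨅ g : G, (F g).maxGenEigenspace (χ g)) :=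
    Module.End.independent_iInf_maxGenEigenspace_of_forall_mapsTo (fun g => F g)
      (fun g h φ => Module.End.mapsTo_maxGenEigenspace_of_comm (hcomm g h).symm φ)
  set E : (G → ℂ) → Submodule ℂ (Fin d → ℂ) :=
    fun χ => ⨅ g : G, (F g).maxGenEigenspace (χ g) with hE
  haveI : Fintype {χ : G → ℂ // E χ ≠ ⊥} := hind.fintypeNeBotOfFiniteDimensional
  set S : Finset (G → ℂ) :=
    (Finset.univ (α := {χ : G → ℂ // E χ ≠ ⊥})).image Subtype.val with hS
  have hmemS : ∀ χ : G → ℂ, χ ∈ S ↔ E χ ≠ ⊥ := by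
    intro χ
    rw [hS, Finset.mem_image]
    constructor
    · rintro ⟨⟨ψ, hψ⟩, -, rfl⟩; exact hψ
    · intro h; exact ⟨⟨χ, h⟩, Finset.mem_univ _, rfl⟩
  -- eigenvector basics
  have heigen : ∀ {χ : G → ℂ} {v : Fin d → ℂ}, v ∈ E χ → ∀ g : G, F g v = χ g • v := by
    intro χ v hv g
    have := (Submodule.mem_iInf _).mp hv g
    rw [heq g, Module.End.mem_eigenspace_iff] at this
    exact this
  refine ⟨S, ?_, ?_, ?_, ?_, ?_⟩
  · -- card bound
    have h1 : S.card = Fintype.card {χ : G → ℂ // E χ ≠ ⊥} := by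
      rw [hS, Finset.card_image_of_injective _ Subtype.val_injective, Finset.card_univ]
    rw [h1]
    have := hind.subtype_ne_bot_le_finrank
    simpa [Module.finrank_pi] using this
  · -- multiplicativity
    intro χ hχ g h
    obtain ⟨v, hv, hv0⟩ := Submodule.exists_mem_ne_zero_of_ne_bot ((hmemS χ).mp hχ)
    have h1 : F (g * h) v = (χ (g * h)) • v := heigen hv (g * h)
    have h2 : F (g * h) v = (χ g * χ h) • v := by
      rw [map_mul, Module.End.mul_apply, heigen hv h, map_smul, heigen hv g, smul_smul,
        mul_comm (χ g)]
    exact smul_left_injective ℂ hv0 (h1.symm.trans h2)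
  · -- χ 1 = 1
    intro χ hχ
    obtain ⟨v, hv, hv0⟩ := Submodule.exists_mem_ne_zero_of_ne_bot ((hmemS χ).mp hχ)
    have h1 : F 1 v = (χ 1) • v := heigen hv 1
    rw [map_one] at h1
    exact smul_left_injective ℂ hv0 (by simpa using h1.symm)
  · -- closure under inverse
    intro χ hχ
    obtain ⟨v, hv, hv0⟩ := Submodule.exists_mem_ne_zero_of_ne_bot ((hmemS χ).mp hχ)
    -- values are roots of unity
    have hroot : ∀ g : G, χ g ^ (Fintype.card G) = 1 := by
      intro g
      have h1 : (F g) ^ (Fintype.card G) = 1 := by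
        rw [← map_pow, pow_card_eq_one, map_one]
      have h2 : ((F g) ^ (Fintype.card G)) v = (χ g ^ (Fintype.card G)) • v := by
        clear h1
        induction' (Fintype.card G) with k ih
        · simp
        · rw [pow_succ, pow_succ, Module.End.mul_apply, heigen hv g, map_smul, ih, smul_smul,
            mul_comm]
      rw [h1] at h2
      exact smul_left_injective ℂ hv0 (by simpa using h2.symm)
    have hconj_inv : ∀ g : G, (starRingEnd ℂ) (χ g) = (χ g)⁻¹ := by
      intro g
      have habs : ‖χ g‖ = 1 := by
        have := congrArg (‖·‖) (hroot g)
        rw [norm_pow, norm_one] at this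
        have h0 : (0:ℝ) ≤ ‖χ g‖ := norm_nonneg _
        rcases (pow_eq_one_iff_cases.mp this) with h | h | h
        · exact absurd h Fintype.card_ne_zero
        · exact h
        · nlinarith [h.1]
      exact (Complex.inv_eq_conj habs).symm
    -- the conjugate vector
    set w : Fin d → ℂ := fun k => (starRingEnd ℂ) (v k) with hw
    have hw0 : w ≠ 0 := by
      intro h
      apply hv0
      funext k
      have := congrFun h k
      simpa [hw] using congrArg (starRingEnd ℂ) this
    have hweig : ∀ g : G, F g w = ((starRingEnd ℂ) (χ g)) • w := by
      intro g
      funext k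
      have hvg := congrFun (heigen hv g) k
      rw [hFapply] at hvg ⊢
      have : ((ρ g : Matrix (Fin d) (Fin d) ℝ).map (algebraMap ℝ ℂ)).mulVec w k
          = (starRingEnd ℂ) (((ρ g : Matrix (Fin d) (Fin d) ℝ).map (algebraMap ℝ ℂ)).mulVec v k) := by
        simp only [Matrix.mulVec, dotProduct, map_sum, map_mul, Matrix.map_apply]
        congr 1
        funext j
        congr 1
        simp [Complex.conj_ofReal]
      rw [this, hvg]
      simp [hw, Pi.smul_apply, smul_eq_mul, map_mul]
    have : E (fun g => (χ g)⁻¹) ≠ ⊥ := by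
      rw [Submodule.ne_bot_iff]
      refine ⟨w, ?_, hw0⟩
      rw [hE]
      refine (Submodule.mem_iInf _).mpr fun g => ?_
      rw [heq g, Module.End.mem_eigenspace_iff]
      rw [hweig g, hconj_inv g]
    exact (hmemS _).mpr this
  · -- separation
    intro g hg
    have hFg : F g = 1 := by
      apply LinearMap.ext
      intro v
      have hvtop : v ∈ (⊤ : Submodule ℂ (Fin d → ℂ)) := Submodule.mem_top
      rw [← htop] at hvtop
      refine Submodule.iSup_induction (motive := fun v => F g v = v) _ hvtop ?_ (map_zero _) ?_
      · intro χ w hw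
        by_cases hb : E χ = ⊥
        · have hw0 : w = 0 := by
            have : w ∈ E χ := hw
            rw [hb] at this
            simpa using this
          simp [hw0]
        · have := heigen hw g
          rw [hg χ ((hmemS χ).mpr hb)] at this
          simpa using this
      · intro x y hx hy
        rw [map_add, hx, hy]
    have hmat : ((ρ g : Matrix (Fin d) (Fin d) ℝ)).map (algebraMap ℝ ℂ)
        = (1 : Matrix (Fin d) (Fin d) ℂ) := by
      apply Matrix.toLinAlgEquiv'.injective
      rw [map_one]
      apply LinearMap.ext
      intro v
      have h0 : F g v = v := by rw [hFg]; rfl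
      rw [hFapply] at h0
      simpa [Matrix.toLinAlgEquiv'_apply, Matrix.mulVecLin_apply] using h0
    have hmat' : (ρ g : Matrix (Fin d) (Fin d) ℝ) = 1 := by
      have hinj : Function.Injective (fun A : Matrix (Fin d) (Fin d) ℝ => A.map (algebraMap ℝ ℂ)) := by
        intro A B h
        funext i j
        have := congrFun (congrFun h i) j
        simpa [Matrix.map_apply] using (algebraMap ℝ ℂ).injective (by simpa using this)
      apply hinj
      simpa [Matrix.map_one (algebraMap ℝ ℂ) (map_zero _) (map_one _)] using hmat
    apply hρ
    rw [map_one]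
    exact Units.ext hmat'


/-- Pointwise inverse of a complex-valued character. -/
noncomputable def my_cinv {G : Type} (χ : G → ℂ) : G → ℂ := fun g => (χ g)⁻¹

/-- An element of `rootsOfUnity` from a complex number with `z ^ q = 1`. -/
noncomputable def my_rou (q : ℕ) [NeZero q] (z : ℂ) (hz : z ^ q = 1) : rootsOfUnity q ℂ :=
  ⟨Units.mkOfMulEqOne z (z ^ (q - 1)) (by
      rw [← pow_succ', Nat.sub_add_cancel (NeZero.one_le)]
      exact hz), by
    rw [mem_rootsOfUnity]
    ext
    rw [Units.val_pow_eq_pow_val]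
    simpa using hz⟩

lemma my_rou_val (q : ℕ) [NeZero q] (z : ℂ) (hz : z ^ q = 1) :
    (((my_rou q z hz : ℂˣ) : ℂ)) = z := rfl

/-- The key counting lemma: if a separating set `S` of characters injects, modulo
the pairing `χ ↔ χ⁻¹` recorded in the finset of orbits `O'`, a copy of `(ZMod q)^ι`
of the group, then `ι` has at most `O'.card` elements. -/
theorem my_count {G : Type} [CommGroup G] [DecidableEq (G → ℂ)] (S : Finset (G → ℂ))
    (hmul : ∀ χ ∈ S, ∀ g h : G, χ (g * h) = χ g * χ h)
    (hone : ∀ χ ∈ S, χ 1 = 1)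
    (hsep : ∀ g : G, (∀ χ ∈ S, χ g = 1) → g = 1)
    {ι : Type} [Fintype ι] {q : ℕ} (hq : 2 ≤ q)
    (e : (ι → ZMod q) → G) (hepow : ∀ u, (e u) ^ q = 1)
    (heinj : Function.Injective e)
    (O' : Finset (Finset (G → ℂ)))
    (hO' : ∀ o ∈ O', ∃ χ, χ ∈ S ∧ o = {χ, my_cinv χ})
    (htriv : ∀ χ ∈ S, ({χ, my_cinv χ} : Finset (G → ℂ)) ∉ O' → ∀ u, χ (e u) = 1) :
    Fintype.card ι ≤ O'.card := by
  classical
  haveI : NeZero q := ⟨by omega⟩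
  have hpow : ∀ χ ∈ S, ∀ (g : G) (k : ℕ), χ (g ^ k) = χ g ^ k := by
    intro χ hχ g k
    induction' k with k ih
    · simpa using hone χ hχ
    · rw [pow_succ, pow_succ, hmul χ hχ, ih]
  have hvals : ∀ χ ∈ S, ∀ u, (χ (e u)) ^ q = 1 := by
    intro χ hχ u
    rw [← hpow χ hχ, hepow, hone χ hχ]
  have hne0 : ∀ χ ∈ S, ∀ u, χ (e u) ≠ 0 := by
    intro χ hχ u h0
    have := hvals χ hχ u
    rw [h0, zero_pow (by omega)] at this
    exact zero_ne_one this
  have hinve : ∀ χ ∈ S, ∀ g : G, χ g⁻¹ = (χ g)⁻¹ := by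
    intro χ hχ g
    have : χ g * χ g⁻¹ = 1 := by rw [← hmul χ hχ, mul_inv_cancel, hone χ hχ]
    exact eq_inv_of_mul_eq_one_right this
  choose rep hrepS hrepEq using hO'
  set Φ : (ι → ZMod q) → ({o // o ∈ O'} → rootsOfUnity q ℂ) :=
    fun u o => my_rou q (rep o.1 o.2 (e u)) (hvals _ (hrepS o.1 o.2) u) with hΦ
  have hΦinj : Function.Injective Φ := by
    intro u v h
    have hall : ∀ χ ∈ S, χ (e u) = χ (e v) := by
      intro χ hχ
      by_cases hm : ({χ, my_cinv χ} : Finset (G → ℂ)) ∈ O'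
      · have h1 : rep _ hm (e u) = rep _ hm (e v) := by
          have := congrFun h ⟨_, hm⟩
          have := congrArg (fun w : rootsOfUnity q ℂ => ((w : ℂˣ) : ℂ)) this
          simpa [hΦ, my_rou_val] using this
        have hχmem : χ ∈ ({rep _ hm, my_cinv (rep _ hm)} : Finset (G → ℂ)) := by
          rw [← hrepEq _ hm]
          exact Finset.mem_insert_self _ _
        rcases Finset.mem_insert.mp hχmem with h2 | h2
        · rw [h2]; exact h1
        · rw [Finset.mem_singleton] at h2
          rw [h2]
          show (rep _ hm (e u))⁻¹ = (rep _ hm (e v))⁻¹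
          rw [h1]
      · rw [htriv χ hχ hm u, htriv χ hχ hm v]
    have he : e u = e v := by
      have h1 : ∀ χ ∈ S, χ (e u * (e v)⁻¹) = 1 := by
        intro χ hχ
        rw [hmul χ hχ, hinve χ hχ, hall χ hχ, mul_inv_cancel₀ (hne0 χ hχ v)]
      have := hsep _ h1
      rwa [mul_inv_eq_one] at this
    exact heinj he
  haveI : Fintype (rootsOfUnity q ℂ) := Fintype.ofFinite _
  have hcard := Fintype.card_le_of_injective Φ hΦinj
  rw [Fintype.card_fun, Fintype.card_fun, ZMod.card,
    ← Nat.card_eq_fintype_card (α := ↥(rootsOfUnity q ℂ)), Complex.card_rootsOfUnity,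
    Fintype.card_coe] at hcard
  exact (Nat.pow_le_pow_iff_right (by omega : 1 < q)).mp hcard


/-- Lower bound for faithful real representations of a finite abelian group: if
`Γ = ℤ/n₁ × ⋯ × ℤ/n_r` with invariant factors `2 ≤ n₁ ∣ ⋯ ∣ n_r`, `s` of which equal
`2` and `t` of which exceed `2`, then a faithful real representation has dimension at
least `s + 2t`. -/
theorem faithful_real_rep_dim_lower_bound
    (r : ℕ) (n : Fin r → ℕ)
    (h2 : ∀ i : Fin r, 2 ≤ n i) (hdvd : ∀ i j : Fin r, i ≤ j → n i ∣ n j)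
    (s t : ℕ)
    (hs : s = (Finset.univ.filter fun i : Fin r => n i = 2).card)
    (ht : t = (Finset.univ.filter fun i : Fin r => 2 < n i).card)
    (d : ℕ)
    (ρ : (∀ i : Fin r, Multiplicative (ZMod (n i))) →* GL (Fin d) ℝ)
    (hρ : Function.Injective ρ) :
    s + 2 * t ≤ d := by
  classical
  haveI : ∀ i, NeZero (n i) := fun i => ⟨by have := h2 i; omega⟩
  rcases Nat.eq_zero_or_pos r with hr | hr
  · have hs0 : s = 0 := by subst hr; simp [hs]
    have ht0 : t = 0 := by subst hr; simp [ht]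
    simp [hs0, ht0]
  set G := (∀ i : Fin r, Multiplicative (ZMod (n i))) with hG
  -- s + t = r
  have hst : s + t = r := by
    have hsum := Finset.card_filter_add_card_filter_not
      (s := (Finset.univ : Finset (Fin r))) (p := fun i => n i = 2)
    have hfilt : Finset.univ.filter (fun i : Fin r => ¬ n i = 2)
        = Finset.univ.filter (fun i : Fin r => 2 < n i) := by
      apply Finset.filter_congr
      intro i _
      have := h2 i
      constructor <;> (intro h; omega)
    rw [hfilt, Finset.card_univ, Fintype.card_fin] at hsum
    rw [hs, ht]
    omega
  obtain ⟨S, hScard, hmul, hone, hinvS0, hsep⟩ := my_stepB ρ hρ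
  have hinvS : ∀ χ ∈ S, my_cinv χ ∈ S := fun χ h => hinvS0 χ h
  -- character basics
  have hpowS : ∀ χ ∈ S, ∀ (g : G) (k : ℕ), χ (g ^ k) = χ g ^ k := by
    intro χ hχ g k
    induction' k with k ih
    · simpa using hone χ hχ
    · rw [pow_succ, pow_succ, hmul χ hχ, ih]
  have hne0S : ∀ χ ∈ S, ∀ g : G, χ g ≠ 0 := by
    intro χ hχ g h0
    have h1 : χ g * χ g⁻¹ = 1 := by rw [← hmul χ hχ, mul_inv_cancel, hone χ hχ]
    rw [h0, zero_mul] at h1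
    exact zero_ne_one h1
  have hprodS : ∀ χ ∈ S, ∀ (sf : Finset (Fin r)) (f : Fin r → G),
      χ (∏ a ∈ sf, f a) = ∏ a ∈ sf, χ (f a) := by
    intro χ hχ sf f
    induction sf using Finset.induction_on with
    | empty => simpa using hone χ hχ
    | insert a sf hx ih => rw [Finset.prod_insert hx, Finset.prod_insert hx, hmul χ hχ, ih]
  -- orbits
  set O : Finset (Finset (G → ℂ)) :=
    S.image (fun χ => ({χ, my_cinv χ} : Finset (G → ℂ))) with hO
  set O₂ : Finset (Finset (G → ℂ)) := O.filter (fun o => o.card = 2) with hO₂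
  set O₁ : Finset (Finset (G → ℂ)) := O.filter (fun o => ¬ o.card = 2) with hO₁
  have hcinv_cinv : ∀ χ : G → ℂ, my_cinv (my_cinv χ) = χ := fun χ =>
    funext fun g => inv_inv _
  have hpair_mem : ∀ {χ ζ : G → ℂ}, ζ ∈ ({χ, my_cinv χ} : Finset (G → ℂ)) →
      ({ζ, my_cinv ζ} : Finset (G → ℂ)) = {χ, my_cinv χ} := by
    intro χ ζ h
    rcases Finset.mem_insert.mp h with h | h
    · rw [h]
    · rw [Finset.mem_singleton] at h
      subst h
      rw [hcinv_cinv]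
      exact Finset.pair_comm _ _
  have hSunion : S = O.biUnion id := by
    ext ζ
    simp only [hO, Finset.mem_biUnion, Finset.mem_image, id]
    constructor
    · intro hζ
      exact ⟨{ζ, my_cinv ζ}, ⟨ζ, hζ, rfl⟩, Finset.mem_insert_self _ _⟩
    · rintro ⟨o, ⟨χ, hχ, rfl⟩, hζo⟩
      rcases Finset.mem_insert.mp hζo with h | h
      · rwa [h]
      · rw [Finset.mem_singleton] at h
        rw [h]
        exact hinvS χ hχ
  have hdisj : ∀ o ∈ O, ∀ o' ∈ O, o ≠ o' → Disjoint (id o) (id o') := by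
    intro o ho o' ho' hne
    obtain ⟨χ, hχ, rfl⟩ := Finset.mem_image.mp ho
    obtain ⟨ψ, hψ, rfl⟩ := Finset.mem_image.mp ho'
    rw [id, id, Finset.disjoint_left]
    intro ζ h1 h2
    exact hne ((hpair_mem h1).symm.trans (hpair_mem h2))
  have hcardsum : S.card = ∑ o ∈ O, o.card := by
    rw [hSunion, Finset.card_biUnion hdisj]
    rfl
  have hsplit : S.card = O₁.card + 2 * O₂.card := by
    rw [hcardsum, ← Finset.sum_filter_add_sum_filter_not O (fun o => o.card = 2)]
    have h1 : ∑ o ∈ O₂, o.card = 2 * O₂.card := by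
      rw [Finset.sum_congr rfl (fun o ho => (Finset.mem_filter.mp ho).2),
        Finset.sum_const, smul_eq_mul, mul_comm]
    have h1' : ∑ o ∈ O₁, o.card = O₁.card := by
      have hcard1 : ∀ o ∈ O₁, o.card = 1 := by
        intro o ho
        obtain ⟨hoO, hno2⟩ := Finset.mem_filter.mp ho
        obtain ⟨χ, hχ, rfl⟩ := Finset.mem_image.mp hoO
        by_cases hcc : my_cinv χ = χ
        · rw [hcc, Finset.pair_eq_singleton, Finset.card_singleton]
        · exact absurd (Finset.card_pair (fun h => hcc h.symm)) hno2
      rw [Finset.sum_congr rfl hcard1, Finset.sum_const, smul_eq_mul, mul_one]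
    rw [h1, h1']
    omega
  have hO21 : O₂.card + O₁.card = O.card :=
    Finset.card_filter_add_card_filter_not (s := O) (p := fun o => o.card = 2)
  -- step (A) : r ≤ O.card
  have hA : r ≤ O.card := by
    set i0 : Fin r := ⟨0, hr⟩ with hi0
    have hq0 : 2 ≤ n i0 := h2 i0
    have hqdvd : ∀ i, n i0 ∣ n i := fun i => hdvd i0 i (by rw [Fin.le_def]; exact Nat.zero_le _)
    set eA : (Fin r → ZMod (n i0)) → G :=
      fun u i => Multiplicative.ofAdd (((n i / n i0 * (u i).val : ℕ) : ZMod (n i))) with heA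
    have hepowA : ∀ u, (eA u) ^ (n i0) = 1 := by
      intro u
      funext i
      rw [Pi.pow_apply, Pi.one_apply]
      exact my_coordpow (hqdvd i) _
    have heinjA : Function.Injective eA := by
      intro u v h
      funext i
      have hi := congrFun h i
      have hi2 : ((n i / n i0 * (u i).val : ℕ) : ZMod (n i))
          = ((n i / n i0 * (v i).val : ℕ) : ZMod (n i)) := by
        simpa [heA] using congrArg Multiplicative.toAdd hi
      exact my_zc hq0 (hqdvd i) (h2 i) hi2
    have hO' : ∀ o ∈ O, ∃ χ, χ ∈ S ∧ o = ({χ, my_cinv χ} : Finset (G → ℂ)) := by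
      intro o ho
      obtain ⟨χ, hχ, h⟩ := Finset.mem_image.mp ho
      exact ⟨χ, hχ, h.symm⟩
    have htrivA : ∀ χ ∈ S, ({χ, my_cinv χ} : Finset (G → ℂ)) ∉ O → ∀ u, χ (eA u) = 1 := by
      intro χ hχ hm
      exact absurd (Finset.mem_image_of_mem _ hχ) hm
    have := my_count S hmul hone hsep hq0 eA hepowA heinjA O hO' htrivA
    simpa using this
  -- step (B) : t ≤ O₂.card
  have hB : t ≤ O₂.card := by
    rcases Nat.eq_zero_or_pos t with ht0 | ht0
    · omega
    set T : Finset (Fin r) := Finset.univ.filter (fun i : Fin r => 2 < n i) with hT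
    have hTcard : T.card = t := ht.symm
    have hTne : T.Nonempty := Finset.card_pos.mp (by omega)
    set i₁ : Fin r := T.min' hTne with hi₁
    have hi₁T : i₁ ∈ T := T.min'_mem hTne
    have hM : 2 < n i₁ := (Finset.mem_filter.mp hi₁T).2
    have hMdvd : ∀ i ∈ T, n i₁ ∣ n i := fun i hi => hdvd i₁ i (T.min'_le i hi)
    -- choose q'
    obtain ⟨q', hq'2, hq'dvd, hkill⟩ :
        ∃ q' : ℕ, 2 ≤ q' ∧ (∀ i ∈ T, q' ∣ n i) ∧
          (∀ χ ∈ S, my_cinv χ = χ → ∀ i ∈ T, ∀ c : ℕ,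
            χ (Pi.mulSingle i (Multiplicative.ofAdd
              (((n i / q' * c : ℕ) : ZMod (n i))))) = 1) := by
      set M : ℕ := n i₁ with hMdef
      set k : ℕ := M.factorization 2 with hk
      set c2 : ℕ := M / 2 ^ k with hc2def
      have hfact : 2 ^ k * c2 = M := Nat.ordProj_mul_ordCompl_eq_self M 2
      by_cases hc2 : c2 = 1
      · -- M is a power of two, at least 4
        have hfact2 : 2 ^ k = M := by rw [hc2, mul_one] at hfact; exact hfact
        have hk2 : 2 ≤ k := by
          by_contra hkk
          push_neg at hkk
          have h1 : 2 ^ k ≤ 2 ^ 1 := Nat.pow_le_pow_right (by norm_num) (by omega)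
          rw [hfact2, pow_one] at h1
          omega
        have hM4 : 4 ∣ M := by
          have h44 : (4:ℕ) = 2 ^ 2 := rfl
          rw [h44, ← hfact2]
          exact pow_dvd_pow 2 hk2
        refine ⟨2, le_refl 2, fun i hi => dvd_trans (dvd_trans ⟨2, rfl⟩ hM4) (hMdvd i hi), ?_⟩
        intro χ hχ hreal i hi c
        have h4i : 4 ∣ n i := dvd_trans hM4 (hMdvd i hi)
        obtain ⟨m, hm⟩ := h4i
        have hd2 : n i / 2 = 2 * m := by
          rw [hm, show (4 : ℕ) * m = 2 * (2 * m) by ring]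
          exact Nat.mul_div_cancel_left _ (by norm_num)
        set x : ZMod (n i) := ((m * c : ℕ) : ZMod (n i)) with hx
        set g0 : G := Pi.mulSingle i (Multiplicative.ofAdd x) with hg0
        have hsq : Pi.mulSingle i (Multiplicative.ofAdd
            (((n i / 2 * c : ℕ) : ZMod (n i)))) = g0 * g0 := by
          rw [hg0, ← Pi.mulSingle_mul]
          congr 1
          rw [← ofAdd_add]
          congr 1
          rw [hd2, hx]
          push_cast
          ring
        rw [hsq, hmul χ hχ]
        have hzreal : (χ g0)⁻¹ = χ g0 := congrFun hreal g0
        nth_rewrite 1 [← hzreal]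
        exact inv_mul_cancel₀ (hne0S χ hχ g0)
      · -- odd divisor case
        have hc2pos : c2 ≠ 0 := by
          intro h
          rw [h, mul_zero] at hfact
          omega
        have hc2ge2 : 2 ≤ c2 := by
          by_contra hlt
          push_neg at hlt
          rcases Nat.le_one_iff_eq_zero_or_eq_one.mp (Nat.le_of_lt_succ hlt) with h | h
          · exact hc2pos h
          · exact hc2 h
        have hoddc2 : ¬ 2 ∣ c2 := Nat.not_dvd_ordCompl Nat.prime_two (by omega : M ≠ 0)
        have hc2dvdM : c2 ∣ M := Nat.ordCompl_dvd M 2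
        refine ⟨c2, hc2ge2, fun i hi => dvd_trans hc2dvdM (hMdvd i hi), ?_⟩
        intro χ hχ hreal i hi c
        set g0 : G := Pi.mulSingle i (Multiplicative.ofAdd
          (((n i / c2 * c : ℕ) : ZMod (n i)))) with hg0
        have hg0pow : g0 ^ c2 = 1 := by
          rw [hg0, ← Pi.mulSingle_pow, my_coordpow (dvd_trans hc2dvdM (hMdvd i hi)) c,
            Pi.mulSingle_one]
        have hz : χ g0 ^ c2 = 1 := by rw [← hpowS χ hχ, hg0pow, hone χ hχ]
        have hz0 : χ g0 ≠ 0 := hne0S χ hχ g0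
        have hzr : (χ g0)⁻¹ = χ g0 := congrFun hreal g0
        have hz2 : χ g0 ^ 2 = 1 := by
          rw [pow_two]
          nth_rewrite 1 [← hzr]
          exact inv_mul_cancel₀ hz0
        obtain ⟨m, hm⟩ : ∃ m, c2 = 2 * m + 1 := ⟨c2 / 2, by omega⟩
        calc χ g0 = (χ g0 ^ 2) ^ m * χ g0 := by rw [hz2, one_pow, one_mul]
          _ = χ g0 ^ c2 := by rw [← pow_mul, ← pow_succ, hm]
          _ = 1 := hz
    -- the embedded (ZMod q')^T
    set eB : ({i : Fin r // i ∈ T} → ZMod q') → G :=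
      fun u i => if h : i ∈ T then Multiplicative.ofAdd
        (((n i / q' * (u ⟨i, h⟩).val : ℕ) : ZMod (n i))) else 1 with heB
    have hepowB : ∀ u, (eB u) ^ q' = 1 := by
      intro u
      funext i
      rw [Pi.pow_apply, Pi.one_apply]
      by_cases h : i ∈ T
      · have : eB u i = Multiplicative.ofAdd
            (((n i / q' * (u ⟨i, h⟩).val : ℕ) : ZMod (n i))) := by
          rw [heB]
          simp [dif_pos h]
        rw [this]
        exact my_coordpow (hq'dvd i h) _
      · have : eB u i = 1 := by rw [heB]; simp [dif_neg h]
        rw [this, one_pow]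
    have heinjB : Function.Injective eB := by
      intro u v h
      funext ⟨i, hi⟩
      have hi2 := congrFun h i
      rw [heB] at hi2
      simp only [dif_pos hi] at hi2
      have hi3 : ((n i / q' * (u ⟨i, hi⟩).val : ℕ) : ZMod (n i))
          = ((n i / q' * (v ⟨i, hi⟩).val : ℕ) : ZMod (n i)) := by
        simpa using congrArg Multiplicative.toAdd hi2
      exact my_zc hq'2 (hq'dvd i hi) (h2 i) hi3
    have hO₂' : ∀ o ∈ O₂, ∃ χ, χ ∈ S ∧ o = ({χ, my_cinv χ} : Finset (G → ℂ)) := by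
      intro o ho
      obtain ⟨χ, hχ, h⟩ := Finset.mem_image.mp (Finset.mem_of_mem_filter o ho)
      exact ⟨χ, hχ, h.symm⟩
    have htrivB : ∀ χ ∈ S, ({χ, my_cinv χ} : Finset (G → ℂ)) ∉ O₂ →
        ∀ u, χ (eB u) = 1 := by
      intro χ hχ hm u
      have hreal : my_cinv χ = χ := by
        by_contra hcc
        have hcard2 : ({χ, my_cinv χ} : Finset (G → ℂ)).card = 2 :=
          Finset.card_pair (fun h => hcc h.symm)
        exact hm (Finset.mem_filter.mpr ⟨Finset.mem_image_of_mem _ hχ, hcard2⟩)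
      rw [← Finset.univ_prod_mulSingle (eB u), hprodS χ hχ]
      apply Finset.prod_eq_one
      intro i _
      by_cases hiT : i ∈ T
      · have hcoord : eB u i = Multiplicative.ofAdd
            (((n i / q' * (u ⟨i, hiT⟩).val : ℕ) : ZMod (n i))) := by
          rw [heB]
          simp [dif_pos hiT]
        rw [hcoord]
        exact hkill χ hχ hreal i hiT _
      · have hcoord : eB u i = 1 := by rw [heB]; simp [dif_neg hiT]
        rw [hcoord, Pi.mulSingle_one]
        exact hone χ hχ
    have := my_count S hmul hone hsep hq'2 eB hepowB heinjB O₂ hO₂' htrivB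
    have hcardT : Fintype.card {i : Fin r // i ∈ T} = t := by
      simpa [hTcard] using Fintype.card_coe T
    rw [hcardT] at this
    exact this
  omega
end
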